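/- arXiv:2507.07208 — 2 statements merged into one kernel-verified Lean document; each statement's English description precedes it below -/
import Mathlib

section
/- Let (𝒞, D) be a split display map 2-category endowed with axiomatic =-types and P_A : Γ.A → Γ a display map. Then the 2-cell φ_A satisfies φ_A ∗ r_A = 1_{r_A}. -/
open CategoryTheory Bicategory

universe w v u

/-- A split display map 2-category (Definition 4.1 of the paper): a (2,1)-category with a
chosen 2-terminal object, together with a class of display maps equipped with chosen split
reindexing squares which are simultaneously pullbacks and 2-pullbacks, with a cloven
isofibration structure on every display map compatible with precomposition, the cleavage
being moreover compatible with reindexing. -/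
structure DM2 (C : Type u) [Bicategory.{w, v} C] [Bicategory.Strict C] where
  /-- every 2-cell is invertible: `C` is a (2,1)-category -/
  isoCells : ∀ {a b : C} {f g : a ⟶ b} (η : f ⟶ g), IsIso η
  /-- the chosen 2-terminal object -/
  term : C
  toTerm : ∀ a : C, a ⟶ term
  termCell : ∀ {a : C} (f g : a ⟶ term), f ⟶ g
  termCell_unique : ∀ {a : C} {f g : a ⟶ term} (η θ : f ⟶ g), η = θ
  /-- the class of display maps -/
  disp : ∀ {x y : C}, (x ⟶ y) → Prop
  /-- chosen pullback object `Δ.A[f]` of a display map `P_A : Γ.A → Γ` along `f : Δ → Γ` -/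
  po : ∀ {x y : C} (P : x ⟶ y), disp P → ∀ {d : C}, (d ⟶ y) → C
  /-- the reindexed display map `P_{A[f]} : Δ.A[f] → Δ` -/
  pr : ∀ {x y : C} (P : x ⟶ y) (hP : disp P) {d : C} (f : d ⟶ y), po P hP f ⟶ d
  /-- the top 1-cell `f.A = f^• : Δ.A[f] → Γ.A` of the chosen square -/
  tp : ∀ {x y : C} (P : x ⟶ y) (hP : disp P) {d : C} (f : d ⟶ y), po P hP f ⟶ x
  pr_disp : ∀ {x y : C} (P : x ⟶ y) (hP : disp P) {d : C} (f : d ⟶ y), disp (pr P hP f)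
  comm : ∀ {x y : C} (P : x ⟶ y) (hP : disp P) {d : C} (f : d ⟶ y),
    tp P hP f ≫ P = pr P hP f ≫ f
  /-- the chosen square is a pullback -/
  pb1 : ∀ {x y : C} (P : x ⟶ y) (hP : disp P) {d : C} (f : d ⟶ y) {w : C}
    (u : w ⟶ d) (v : w ⟶ x), v ≫ P = u ≫ f →
      ∃! k : w ⟶ po P hP f, k ≫ pr P hP f = u ∧ k ≫ tp P hP f = v
  /-- the chosen square is a 2-pullback -/
  pb2 : ∀ {x y : C} (P : x ⟶ y) (hP : disp P) {d : C} (f : d ⟶ y) {w : C}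
    (k k' : w ⟶ po P hP f) (μ : k ≫ pr P hP f ⟶ k' ≫ pr P hP f)
    (ν : k ≫ tp P hP f ⟶ k' ≫ tp P hP f), HEq (ν ▷ P) (μ ▷ f) →
      ∃! σ : k ⟶ k', σ ▷ pr P hP f = μ ∧ σ ▷ tp P hP f = ν
  /-- splitness: `P_{A[1_Γ]} = P_A` and `(1_Γ).A = 1_{Γ.A}` -/
  po_id : ∀ {x y : C} (P : x ⟶ y) (hP : disp P), po P hP (𝟙 y) = x
  pr_id : ∀ {x y : C} (P : x ⟶ y) (hP : disp P), HEq (pr P hP (𝟙 y)) P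
  tp_id : ∀ {x y : C} (P : x ⟶ y) (hP : disp P), HEq (tp P hP (𝟙 y)) (𝟙 x)
  /-- splitness: `P_{A[fg]} = P_{A[f][g]}` and `(f.A)(g.A[f]) = (fg).A` -/
  po_comp : ∀ {x y : C} (P : x ⟶ y) (hP : disp P) {d : C} (f : d ⟶ y) {d' : C} (g : d' ⟶ d),
    po (pr P hP f) (pr_disp P hP f) g = po P hP (g ≫ f)
  pr_comp : ∀ {x y : C} (P : x ⟶ y) (hP : disp P) {d : C} (f : d ⟶ y) {d' : C} (g : d' ⟶ d),
    HEq (pr (pr P hP f) (pr_disp P hP f) g) (pr P hP (g ≫ f))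
  tp_comp : ∀ {x y : C} (P : x ⟶ y) (hP : disp P) {d : C} (f : d ⟶ y) {d' : C} (g : d' ⟶ d),
    HEq (tp (pr P hP f) (pr_disp P hP f) g ≫ tp P hP f) (tp P hP (g ≫ f))
  /-- every display map is a cloven isofibration: the chosen lift `t_g^p` -/
  lift : ∀ {x y : C} (P : x ⟶ y), disp P → ∀ {d : C} (g : d ⟶ x) (f : d ⟶ y),
    (f ⟶ g ≫ P) → (d ⟶ x)
  lift_over : ∀ {x y : C} (P : x ⟶ y) (hP : disp P) {d : C} (g : d ⟶ x) (f : d ⟶ y)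
    (p : f ⟶ g ≫ P), lift P hP g f p ≫ P = f
  /-- the chosen lifted 2-cell `τ_g^p : t_g^p ⇒ g` -/
  liftCell : ∀ {x y : C} (P : x ⟶ y) (hP : disp P) {d : C} (g : d ⟶ x) (f : d ⟶ y)
    (p : f ⟶ g ≫ P), lift P hP g f p ⟶ g
  liftCell_over : ∀ {x y : C} (P : x ⟶ y) (hP : disp P) {d : C} (g : d ⟶ x) (f : d ⟶ y)
    (p : f ⟶ g ≫ P), HEq (liftCell P hP g f p ▷ P) p
  /-- the cleavage is compatible with precomposition: `t_{gh}^{p∗h} = t_g^p h` -/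
  lift_whisker : ∀ {x y : C} (P : x ⟶ y) (hP : disp P) {d : C} (g : d ⟶ x) (f : d ⟶ y)
    (p : f ⟶ g ≫ P) {d₀ : C} (h : d₀ ⟶ d) (p' : h ≫ f ⟶ (h ≫ g) ≫ P), HEq p' (h ◁ p) →
      lift P hP (h ≫ g) (h ≫ f) p' = h ≫ lift P hP g f p
  /-- the cleavage is compatible with precomposition: `τ_{gh}^{p∗h} = τ_g^p ∗ h` -/
  liftCell_whisker : ∀ {x y : C} (P : x ⟶ y) (hP : disp P) {d : C} (g : d ⟶ x) (f : d ⟶ y)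
    (p : f ⟶ g ≫ P) {d₀ : C} (h : d₀ ⟶ d) (p' : h ≫ f ⟶ (h ≫ g) ≫ P), HEq p' (h ◁ p) →
      HEq (liftCell P hP (h ≫ g) (h ≫ f) p') (h ◁ liftCell P hP g f p)
  /-- the cleavage is compatible with reindexing (fourth clause of Definition 4.1):
  `t_g^p[f.A] = t_{g'}^{p[f]}` -/
  lift_reindex : ∀ {x y : C} (Q : x ⟶ y) (hQ : disp Q) {y' : C} (m : y' ⟶ y)
    {w w' : C} (g : w ⟶ x) (f : w ⟶ y) (p : f ⟶ g ≫ Q)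
    (g' : w' ⟶ po Q hQ m) (f' : w' ⟶ y') (u : w' ⟶ w),
    g' ≫ tp Q hQ m = u ≫ g → f' ≫ m = u ≫ f →
    ∀ (p' : f' ⟶ g' ≫ pr Q hQ m), HEq (p' ▷ m) (u ◁ p) →
      lift (pr Q hQ m) (pr_disp Q hQ m) g' f' p' ≫ tp Q hQ m = u ≫ lift Q hQ g f p
  /-- the cleavage is compatible with reindexing: `τ_g^p[f.A] = τ_{g'}^{p[f]}` -/
  liftCell_reindex : ∀ {x y : C} (Q : x ⟶ y) (hQ : disp Q) {y' : C} (m : y' ⟶ y)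
    {w w' : C} (g : w ⟶ x) (f : w ⟶ y) (p : f ⟶ g ≫ Q)
    (g' : w' ⟶ po Q hQ m) (f' : w' ⟶ y') (u : w' ⟶ w),
    g' ≫ tp Q hQ m = u ≫ g → f' ≫ m = u ≫ f →
    ∀ (p' : f' ⟶ g' ≫ pr Q hQ m), HEq (p' ▷ m) (u ◁ p) →
      HEq (liftCell (pr Q hQ m) (pr_disp Q hQ m) g' f' p' ▷ tp Q hQ m)
        (u ◁ liftCell Q hQ g f p)

namespace DM2

variable {C : Type u} [Bicategory.{w, v} C] [Bicategory.Strict C]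

/-- `s` is a section of the display map `P`. -/
def IsSect (_ : DM2 C) {x y : C} (P : x ⟶ y) (s : y ⟶ x) : Prop := s ≫ P = 𝟙 y

/-- `k` is the 1-cell induced by the universal property of the chosen pullback of `P` along
`f` from the cone `(u, v)`. -/
def IsInduced (M : DM2 C) {x y : C} (P : x ⟶ y) (hP : M.disp P) {d : C} (f : d ⟶ y)
    {w : C} (u : w ⟶ d) (v : w ⟶ x) (k : w ⟶ M.po P hP f) : Prop :=
  k ≫ M.pr P hP f = u ∧ k ≫ M.tp P hP f = v

/-- `k` is the reindexed section `s[f]` of the section `s` of `P` along `f`, i.e. the unique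
section of `P_{A[f]}` with `f^• ∘ s[f] = s ∘ f`. -/
def IsSectRe (M : DM2 C) {x y : C} (P : x ⟶ y) (hP : M.disp P) {d : C} (f : d ⟶ y)
    (s : y ⟶ x) (k : d ⟶ M.po P hP f) : Prop :=
  IsInduced M P hP f (𝟙 d) (f ≫ s) k

/-- `σ` is a 2-cell lying over the identity, i.e. an arrow of the category of sections
of the display map `P`. -/
def IsOverCell (_ : DM2 C) {x y : C} (P : x ⟶ y) {a b : y ⟶ x} (σ : a ⟶ b) : Prop :=
  HEq (σ ▷ P) (𝟙 (𝟙 y))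

/-- `σ` is the reindexed 2-cell `p[f]` between the reindexed sections `k₁ = a[f]` and
`k₂ = b[f]`, obtained from the 2-pullback property of the chosen square. -/
def IsCellRe (M : DM2 C) {x y : C} (P : x ⟶ y) (hP : M.disp P) {d : C} (f : d ⟶ y)
    {a b : y ⟶ x} (p : a ⟶ b) {k₁ k₂ : d ⟶ M.po P hP f} (σ : k₁ ⟶ k₂) : Prop :=
  HEq (σ ▷ M.pr P hP f) (𝟙 (𝟙 d)) ∧ HEq (σ ▷ M.tp P hP f) (f ◁ p)

end DM2

/-- A display map 2-category endowed with axiomatic `=`-types (Definition 4.2 of the paper):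
for every display map `P_A` a chosen display map `P_{Id_A} : Γ.A.A▽.Id_A → Γ.A.A▽` with a
chosen 2-cell `α_A : P_{A▽}P_{Id_A} ⇒ P_A^•P_{Id_A}` over `Γ` which is an arrow object for
`P_A` (postcomposition with `α_A` induces isomorphisms of the slice hom-categories onto the
corresponding arrow categories, 2-naturally), the choices being stable under reindexing. -/
structure AxId {C : Type u} [Bicategory.{w, v} C] [Bicategory.Strict C] (M : DM2 C) where
  idO : ∀ {x y : C} (P : x ⟶ y), M.disp P → C
  idP : ∀ {x y : C} (P : x ⟶ y) (hP : M.disp P), idO P hP ⟶ M.po P hP P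
  idDisp : ∀ {x y : C} (P : x ⟶ y) (hP : M.disp P), M.disp (idP P hP)
  /-- the arrow object 2-cell `α_A : P_{A▽}P_{Id_A} ⇒ P_A^•P_{Id_A}` -/
  alpha : ∀ {x y : C} (P : x ⟶ y) (hP : M.disp P),
    (idP P hP ≫ M.pr P hP P) ⟶ (idP P hP ≫ M.tp P hP P)
  /-- `α_A` is a 2-cell of `𝒞/Γ` -/
  alpha_over : ∀ {x y : C} (P : x ⟶ y) (hP : M.disp P),
    HEq (alpha P hP ▷ P) (𝟙 ((idP P hP ≫ M.pr P hP P) ≫ P))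
  /-- `α_A` is an arrow object: unique factorisation of 1-cells (objects of the arrow
  category of the slice hom-category) through `α_A` -/
  factor1 : ∀ {x y : C} (P : x ⟶ y) (hP : M.disp P) {d : C}
    (a b : d ⟶ x), a ≫ P = b ≫ P → ∀ (q : a ⟶ b), HEq (q ▷ P) (𝟙 (a ≫ P)) →
      ∃! k : d ⟶ idO P hP, k ≫ (idP P hP ≫ M.pr P hP P) = a ∧
        k ≫ (idP P hP ≫ M.tp P hP P) = b ∧ HEq (k ◁ alpha P hP) q
  /-- `α_A` is an arrow object: unique factorisation of 2-cells (morphisms of the arrow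
  category of the slice hom-category) through `α_A` -/
  factor2 : ∀ {x y : C} (P : x ⟶ y) (hP : M.disp P) {d : C} (k k' : d ⟶ idO P hP)
    (σ₁ : k ≫ (idP P hP ≫ M.pr P hP P) ⟶ k' ≫ (idP P hP ≫ M.pr P hP P))
    (σ₂ : k ≫ (idP P hP ≫ M.tp P hP P) ⟶ k' ≫ (idP P hP ≫ M.tp P hP P)),
    HEq (σ₁ ▷ P) (𝟙 ((k ≫ (idP P hP ≫ M.pr P hP P)) ≫ P)) →
    HEq (σ₂ ▷ P) (𝟙 ((k ≫ (idP P hP ≫ M.tp P hP P)) ≫ P)) →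
    (k ◁ alpha P hP) ≫ σ₂ = σ₁ ≫ (k' ◁ alpha P hP) →
      ∃! θ : k ⟶ k', θ ▷ (idP P hP ≫ M.pr P hP P) = σ₁ ∧
        θ ▷ (idP P hP ≫ M.tp P hP P) = σ₂
  /-- stability: `Id_A[f^{••}] = Id_{A[f]}` (on objects) -/
  idO_stab : ∀ {x y : C} (P : x ⟶ y) (hP : M.disp P) {d : C} (f : d ⟶ y),
    M.po (idP P hP) (idDisp P hP)
        (M.tp (M.pr P hP P) (M.pr_disp P hP P) (M.tp P hP f))
      = idO (M.pr P hP f) (M.pr_disp P hP f)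
  /-- stability: `Id_A[f^{••}] = Id_{A[f]}` (on display maps) -/
  idP_stab : ∀ {x y : C} (P : x ⟶ y) (hP : M.disp P) {d : C} (f : d ⟶ y),
    HEq (M.pr (idP P hP) (idDisp P hP)
          (M.tp (M.pr P hP P) (M.pr_disp P hP P) (M.tp P hP f)))
      (idP (M.pr P hP f) (M.pr_disp P hP f))
  /-- stability: `α_A[f] = α_{A[f]}` -/
  alpha_stab : ∀ {x y : C} (P : x ⟶ y) (hP : M.disp P) {d : C} (f : d ⟶ y),
    HEq (alpha (M.pr P hP f) (M.pr_disp P hP f) ▷ M.tp P hP f)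
      ((M.tp (idP P hP) (idDisp P hP)
          (M.tp (M.pr P hP P) (M.pr_disp P hP P) (M.tp P hP f))) ◁ alpha P hP)

namespace DM2

variable {C : Type u} [Bicategory.{w, v} C] [Bicategory.Strict C]

/-- `r` is the 1-cell `r_A : Γ.A → Γ.A.A▽.Id_A`, i.e. the unique 1-cell over `Γ` with
`α_A ∗ r_A = 1_{1_{Γ.A}}`. -/
def IsR (M : DM2 C) (E : AxId M) {x y : C} (P : x ⟶ y) (hP : M.disp P)
    (r : x ⟶ E.idO P hP) : Prop :=
  r ≫ (E.idP P hP ≫ M.pr P hP P) = 𝟙 x ∧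
  r ≫ (E.idP P hP ≫ M.tp P hP P) = 𝟙 x ∧
  HEq (r ◁ E.alpha P hP) (𝟙 (𝟙 x))

/-- `φ` is the 2-cell `φ_A : 1 ⇒ r_A(P_A^•P_{Id_A})`, i.e. the unique 2-cell with
`P_{A▽}P_{Id_A} ∗ φ_A = α_A` and `P_A^•P_{Id_A} ∗ φ_A = 1`. -/
def IsPhi (M : DM2 C) (E : AxId M) {x y : C} (P : x ⟶ y) (hP : M.disp P)
    (r : x ⟶ E.idO P hP)
    (φ : 𝟙 (E.idO P hP) ⟶ (E.idP P hP ≫ M.tp P hP P) ≫ r) : Prop :=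
  HEq (φ ▷ (E.idP P hP ≫ M.pr P hP P)) (E.alpha P hP) ∧
  HEq (φ ▷ (E.idP P hP ≫ M.tp P hP P)) (𝟙 (E.idP P hP ≫ M.tp P hP P))

/-- `J` is the elimination section `J_c := t_{ĵ_c}^{φ_A}` of the display map `P_C`, where
`ĵ_c := (r_A.C) ∘ c ∘ (P_A^•P_{Id_A})` is the elimination pseudo-term. -/
def IsJ (M : DM2 C) (E : AxId M) {x y : C} (P : x ⟶ y) (hP : M.disp P)
    {xC : C} (Q : xC ⟶ E.idO P hP) (hQ : M.disp Q)
    (r : x ⟶ E.idO P hP) (φ : 𝟙 (E.idO P hP) ⟶ (E.idP P hP ≫ M.tp P hP P) ≫ r)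
    (c : x ⟶ M.po Q hQ r) (J : E.idO P hP ⟶ xC) : Prop :=
  ∃ p' : 𝟙 (E.idO P hP) ⟶ ((E.idP P hP ≫ M.tp P hP P) ≫ c ≫ M.tp Q hQ r) ≫ Q,
    HEq p' φ ∧
      J = M.lift Q hQ ((E.idP P hP ≫ M.tp P hP P) ≫ c ≫ M.tp Q hQ r) (𝟙 (E.idO P hP)) p'

/-- `h` is the 2-cell `h_c : J_c[r_A] ⇒ c`, i.e. the unique 2-cell with
`P_{C[r_A]} ∗ h_c = 1` and `r_A^• ∗ h_c = τ_{ĵ_c}^{φ_A} ∗ r_A`. -/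
def IsHCell (M : DM2 C) (E : AxId M) {x y : C} (P : x ⟶ y) (hP : M.disp P)
    {xC : C} (Q : xC ⟶ E.idO P hP) (hQ : M.disp Q)
    (r : x ⟶ E.idO P hP) (c : x ⟶ M.po Q hQ r)
    (p' : 𝟙 (E.idO P hP) ⟶ ((E.idP P hP ≫ M.tp P hP P) ≫ c ≫ M.tp Q hQ r) ≫ Q)
    {Jr : x ⟶ M.po Q hQ r} (h : Jr ⟶ c) : Prop :=
  HEq (h ▷ M.pr Q hQ r) (𝟙 (𝟙 x)) ∧
  HEq (h ▷ M.tp Q hQ r)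
    (r ◁ M.liftCell Q hQ ((E.idP P hP ≫ M.tp P hP P) ≫ c ≫ M.tp Q hQ r)
      (𝟙 (E.idO P hP)) p')

/-- `s` is the section `{p}` of `P_{Id_A[a;b]}` associated to the arrow `p : a ⇒ b` of the
category of sections of the display map `R`, characterised by `α_R (a;b)^• {p} = p`;
`ab` is the pairing `a;b`. -/
def Corr (M : DM2 C) (E : AxId M) {x y : C} (R : x ⟶ y) (hR : M.disp R)
    (a b : y ⟶ x) (p : a ⟶ b) (ab : y ⟶ M.po R hR R)
    (s : y ⟶ M.po (E.idP R hR) (E.idDisp R hR) ab) : Prop :=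
  IsInduced M R hR R a b ab ∧
  ∃ k : y ⟶ E.idO R hR,
    (k ≫ (E.idP R hR ≫ M.pr R hR R) = a ∧
     k ≫ (E.idP R hR ≫ M.tp R hR R) = b ∧ HEq (k ◁ E.alpha R hR) p) ∧
    IsInduced M (E.idP R hR) (E.idDisp R hR) ab (𝟙 y) k s

end DM2

/-- STATEMENT 9.  Let `(𝒞, D)` be a split display map 2-category endowed with axiomatic
`=`-types and `P_A : Γ.A → Γ` a display map.  Then the 2-cell `φ_A` satisfies
`φ_A ∗ r_A = 1_{r_A}`.  (Here `r` and `φ` are quantified together with their defining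
characterisations, which determine them uniquely by the arrow object property; the
conclusion is stated as a heterogeneous equality since the two sides are parallel only up
to the equations `r ∘ id = r` and `r ∘ (P_A^•P_{Id_A}) ∘ r_A = r`.) -/
theorem statement9 {C : Type u} [Bicategory.{w, v} C] [Bicategory.Strict C]
    (M : DM2 C) (E : AxId M) {x y : C} (P : x ⟶ y) (hP : M.disp P)
    (r : x ⟶ E.idO P hP) (hr : DM2.IsR M E P hP r)
    (φ : 𝟙 (E.idO P hP) ⟶ (E.idP P hP ≫ M.tp P hP P) ≫ r)
    (hφ : DM2.IsPhi M E P hP r φ) :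
    HEq (r ◁ φ) (𝟙 r) := by
  obtain ⟨hrA, hrB, hrα⟩ := hr
  obtain ⟨hφA, hφB⟩ := hφ
  have e1 : r ≫ 𝟙 (E.idO P hP) = r := Category.comp_id r
  have e2 : r ≫ (E.idP P hP ≫ M.tp P hP P) ≫ r = r := by rw [← Category.assoc, hrB, Category.id_comp]
  -- rewrite the three HEq hypotheses as eqToHom conjugations
  have eφA : φ ▷ (E.idP P hP ≫ M.pr P hP P) = eqToHom (Category.id_comp (E.idP P hP ≫ M.pr P hP P)) ≫ E.alpha P hP ≫
      eqToHom (show (E.idP P hP ≫ M.tp P hP P) = ((E.idP P hP ≫ M.tp P hP P) ≫ r) ≫ (E.idP P hP ≫ M.pr P hP P) by rw [Category.assoc, hrA, Category.comp_id]) :=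
    (conj_eqToHom_iff_heq' _ _ _ _).2 hφA
  have eφB : φ ▷ (E.idP P hP ≫ M.tp P hP P) = eqToHom (Category.id_comp (E.idP P hP ≫ M.tp P hP P)) ≫ 𝟙 (E.idP P hP ≫ M.tp P hP P) ≫
      eqToHom (show (E.idP P hP ≫ M.tp P hP P) = ((E.idP P hP ≫ M.tp P hP P) ≫ r) ≫ (E.idP P hP ≫ M.tp P hP P) by rw [Category.assoc, hrB, Category.comp_id]) :=
    (conj_eqToHom_iff_heq' _ _ _ _).2 hφB
  have erα : r ◁ E.alpha P hP = eqToHom hrA ≫ 𝟙 (𝟙 x) ≫ eqToHom hrB.symm :=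
    (conj_eqToHom_iff_heq' _ _ _ _).2 hrα
  -- the conjugated cell θ : r ⟶ r
  set θ : r ⟶ r := eqToHom e1.symm ≫ (r ◁ φ) ≫ eqToHom e2 with hθdef
  have hwA : θ ▷ (E.idP P hP ≫ M.pr P hP P) = 𝟙 (r ≫ (E.idP P hP ≫ M.pr P hP P)) := by
    rw [hθdef]
    simp only [Bicategory.comp_whiskerRight, Bicategory.eqToHom_whiskerRight,
      Bicategory.whisker_assoc, Bicategory.Strict.associator_eqToIso, eqToIso.hom, eqToIso.inv,
      eφA, Bicategory.whiskerLeft_comp, Bicategory.whiskerLeft_eqToHom, erα, Category.assoc,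
      Category.id_comp, eqToHom_trans, eqToHom_refl, Category.comp_id]
  have hwB : θ ▷ (E.idP P hP ≫ M.tp P hP P) = 𝟙 (r ≫ (E.idP P hP ≫ M.tp P hP P)) := by
    rw [hθdef]
    simp only [Bicategory.comp_whiskerRight, Bicategory.eqToHom_whiskerRight,
      Bicategory.whisker_assoc, Bicategory.Strict.associator_eqToIso, eqToIso.hom, eqToIso.inv,
      eφB, Bicategory.whiskerLeft_comp, Bicategory.whiskerLeft_eqToHom,
      Bicategory.whiskerLeft_id, Category.assoc,
      Category.id_comp, eqToHom_trans, eqToHom_refl, Category.comp_id]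
  obtain ⟨θ₀, -, huniq⟩ := E.factor2 P hP r r (𝟙 (r ≫ (E.idP P hP ≫ M.pr P hP P))) (𝟙 (r ≫ (E.idP P hP ≫ M.tp P hP P)))
    (by rw [Bicategory.id_whiskerRight]) (by rw [Bicategory.id_whiskerRight])
    (by rw [Category.comp_id, Category.id_comp])
  have hθ : θ = 𝟙 r :=
    (huniq θ ⟨hwA, hwB⟩).trans
      (huniq (𝟙 r) ⟨Bicategory.id_whiskerRight _ _, Bicategory.id_whiskerRight _ _⟩).symm
  refine (conj_eqToHom_iff_heq _ _ e1 e2).1 ?_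
  calc r ◁ φ = eqToHom e1 ≫ θ ≫ eqToHom e2.symm := by
        rw [hθdef]; simp [eqToHom_trans_assoc, eqToHom_refl]
    _ = eqToHom e1 ≫ 𝟙 r ≫ eqToHom e2.symm := by rw [hθ]
end

section
/- Let (𝒞, D) be a split display map 2-category endowed with axiomatic =-types, P_A : Γ.A → Γ a display map, a and b sections of P_A, p : a ⇒ b an arrow in the category of sections of P_A, and f : Δ → Γ a 1-cell. Then {p}[f] = {p[f]}, where p[f] : a[f] ⇒ b[f] is the re-indexed 2-cell. -/
open CategoryTheory Bicategory

universe w v u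

section StrictAux

variable {C : Type u} [Bicategory.{w, v} C] [Bicategory.Strict C]

/-- The category of objects and 1-cells of a strict bicategory. -/
def DM2.strictCat (C : Type u) [Bicategory.{w, v} C] [Bicategory.Strict C] :
    CategoryTheory.Category.{v} C where
  id_comp := Bicategory.Strict.id_comp
  comp_id := Bicategory.Strict.comp_id
  assoc := Bicategory.Strict.assoc

lemma DM2.heq_comp_whiskerLeft {a b c d : C} (f : a ⟶ b) (g : b ⟶ c) {h h' : c ⟶ d}
    (η : h ⟶ h') : HEq ((f ≫ g) ◁ η) (f ◁ g ◁ η) := by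
  rw [comp_whiskerLeft, Bicategory.Strict.associator_eqToIso,
    Bicategory.Strict.associator_eqToIso]
  simp

lemma DM2.heq_whisker_assoc {a b c d : C} (f : a ⟶ b) {g g' : b ⟶ c} (η : g ⟶ g')
    (h : c ⟶ d) : HEq ((f ◁ η) ▷ h) (f ◁ (η ▷ h)) := by
  rw [whisker_assoc, Bicategory.Strict.associator_eqToIso,
    Bicategory.Strict.associator_eqToIso]
  simp

lemma DM2.heq_whiskerRight_comp {a b c d : C} {f f' : a ⟶ b} (η : f ⟶ f') (g : b ⟶ c)
    (h : c ⟶ d) : HEq (η ▷ (g ≫ h)) ((η ▷ g) ▷ h) := by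
  rw [Bicategory.whiskerRight_comp, Bicategory.Strict.associator_eqToIso,
    Bicategory.Strict.associator_eqToIso]
  simp

lemma DM2.comp_congr_heq {a a' b b' c c' : C} (ha : a = a') (hb : b = b') (hc : c = c')
    {f : a ⟶ b} {f' : a' ⟶ b'} {g : b ⟶ c} {g' : b' ⟶ c'}
    (hf : HEq f f') (hg : HEq g g') : HEq (f ≫ g) (f' ≫ g') := by
  subst ha; subst hb; subst hc; cases hf; cases hg; rfl

lemma DM2.whiskerLeft_congr_heq {a b b' c c' : C} (hb : b = b') (hc : c = c')
    {f : a ⟶ b} {f' : a ⟶ b'} {g h : b ⟶ c} {g' h' : b' ⟶ c'}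
    (hf : HEq f f') (hg : HEq g g') (hh : HEq h h')
    {η : g ⟶ h} {η' : g' ⟶ h'} (hη : HEq η η') : HEq (f ◁ η) (f' ◁ η') := by
  subst hb; subst hc; cases hf; cases hg; cases hh; cases hη; rfl

lemma DM2.whiskerRight_congr_heq {a b b' c : C} (hb : b = b')
    {g h : a ⟶ b} {g' h' : a ⟶ b'} {f : b ⟶ c} {f' : b' ⟶ c}
    (hf : HEq f f') (hg : HEq g g') (hh : HEq h h')
    {η : g ⟶ h} {η' : g' ⟶ h'} (hη : HEq η η') : HEq (η ▷ f) (η' ▷ f') := by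
  subst hb; cases hf; cases hg; cases hh; cases hη; rfl

lemma DM2.id2_congr_heq {a b b' : C} (hb : b = b') {f : a ⟶ b} {f' : a ⟶ b'}
    (hf : HEq f f') : HEq (𝟙 f) (𝟙 f') := by subst hb; cases hf; rfl

lemma DM2.po_congr (M : DM2 C) {x x' y y' e e' : C} (hx : x = x') (hy : y = y')
    (he : e = e') {P : x ⟶ y} {P' : x' ⟶ y'} (hP : M.disp P) (hP' : M.disp P')
    {g : e ⟶ y} {g' : e' ⟶ y'} (hPP : HEq P P') (hgg : HEq g g') :
    M.po P hP g = M.po P' hP' g' := by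
  subst hx; subst hy; subst he; cases hPP; cases hgg; rfl

lemma DM2.pr_congr (M : DM2 C) {x x' y y' e e' : C} (hx : x = x') (hy : y = y')
    (he : e = e') {P : x ⟶ y} {P' : x' ⟶ y'} (hP : M.disp P) (hP' : M.disp P')
    {g : e ⟶ y} {g' : e' ⟶ y'} (hPP : HEq P P') (hgg : HEq g g') :
    HEq (M.pr P hP g) (M.pr P' hP' g') := by
  subst hx; subst hy; subst he; cases hPP; cases hgg; rfl

lemma DM2.tp_congr (M : DM2 C) {x x' y y' e e' : C} (hx : x = x') (hy : y = y')
    (he : e = e') {P : x ⟶ y} {P' : x' ⟶ y'} (hP : M.disp P) (hP' : M.disp P')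
    {g : e ⟶ y} {g' : e' ⟶ y'} (hPP : HEq P P') (hgg : HEq g g') :
    HEq (M.tp P hP g) (M.tp P' hP' g') := by
  subst hx; subst hy; subst he; cases hPP; cases hgg; rfl

lemma DM2.pb_unique (M : DM2 C) {x y : C} {P : x ⟶ y} (hP : M.disp P) {e : C}
    (g : e ⟶ y) {w : C} {u : w ⟶ e} {v : w ⟶ x} (hc : v ≫ P = u ≫ g)
    {k₁ k₂ : w ⟶ M.po P hP g}
    (h1 : k₁ ≫ M.pr P hP g = u ∧ k₁ ≫ M.tp P hP g = v)
    (h2 : k₂ ≫ M.pr P hP g = u ∧ k₂ ≫ M.tp P hP g = v) : k₁ = k₂ := by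
  obtain ⟨z, _, hz⟩ := M.pb1 P hP g u v hc
  rw [hz k₁ h1, hz k₂ h2]

end StrictAux

/-- STATEMENT 10.  Let `(𝒞, D)` be a split display map 2-category endowed with axiomatic
`=`-types, `P_A : Γ.A → Γ` a display map, `a` and `b` sections of `P_A`, `p : a ⇒ b` an
arrow in the category of sections of `P_A`, and `f : Δ → Γ` a 1-cell.  Then
`{p}[f] = {p[f]}`, where `p[f] : a[f] ⇒ b[f]` is the re-indexed 2-cell.

All derived data (`a[f]`, `b[f]`, `p[f]`, the pairings `a;b` and `a[f];b[f]`, and the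
sections `{p}` and `{p[f]}`) are quantified together with their defining characterisations,
which determine them uniquely; the conclusion is a heterogeneous equality since the two
sections live over display maps which coincide only by the split stability equations. -/
theorem statement10 {C : Type u} [Bicategory.{w, v} C] [Bicategory.Strict C]
    (M : DM2 C) (E : AxId M) {x y : C} (R : x ⟶ y) (hR : M.disp R)
    {d : C} (f : d ⟶ y)
    (a b : y ⟶ x) (ha : DM2.IsSect M R a) (hb : DM2.IsSect M R b)
    (p : a ⟶ b) (hp : DM2.IsOverCell M R p)
    -- the pairing `a;b` and the section `{p}`
    (ab : y ⟶ M.po R hR R)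
    (cur : y ⟶ M.po (E.idP R hR) (E.idDisp R hR) ab)
    (hcur : DM2.Corr M E R hR a b p ab cur)
    -- the reindexed sections `a[f]`, `b[f]` and reindexed 2-cell `p[f]`
    (af bf : d ⟶ M.po R hR f)
    (haf : DM2.IsSectRe M R hR f a af) (hbf : DM2.IsSectRe M R hR f b bf)
    (pf : af ⟶ bf) (hpf : DM2.IsCellRe M R hR f p pf)
    -- the pairing `a[f];b[f]` and the section `{p[f]}`
    (ab' : d ⟶ M.po (M.pr R hR f) (M.pr_disp R hR f) (M.pr R hR f))
    (cur' : d ⟶ M.po (E.idP (M.pr R hR f) (M.pr_disp R hR f))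
      (E.idDisp (M.pr R hR f) (M.pr_disp R hR f)) ab')
    (hcur' : DM2.Corr M E (M.pr R hR f) (M.pr_disp R hR f) af bf pf ab' cur')
    -- the reindexed section `{p}[f]`
    (curf : d ⟶ M.po (M.pr (E.idP R hR) (E.idDisp R hR) ab)
      (M.pr_disp (E.idP R hR) (E.idDisp R hR) ab) f)
    (hcurf : DM2.IsSectRe M (M.pr (E.idP R hR) (E.idDisp R hR) ab)
      (M.pr_disp (E.idP R hR) (E.idDisp R hR) ab) f cur curf) :
    HEq curf cur' := by
  obtain ⟨⟨hab_pr, hab_tp⟩, k, ⟨hk_a, hk_b, hk_p⟩, hcur_pr, hcur_tp⟩ := hcur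
  obtain ⟨⟨hab'_pr, hab'_tp⟩, k', ⟨hk'_a, hk'_b, hk'_p⟩, hcur'_pr, hcur'_tp⟩ := hcur'
  obtain ⟨hcurf_pr, hcurf_tp⟩ := hcurf
  obtain ⟨haf_pr, haf_tp⟩ := haf
  obtain ⟨hbf_pr, hbf_tp⟩ := hbf
  obtain ⟨hpf_pr, hpf_tp⟩ := hpf
  have asc : ∀ {a₁ b₁ c₁ d₁ : C} (f₁ : a₁ ⟶ b₁) (g₁ : b₁ ⟶ c₁) (h₁ : c₁ ⟶ d₁),
      (f₁ ≫ g₁) ≫ h₁ = f₁ ≫ g₁ ≫ h₁ := fun f₁ g₁ h₁ => Bicategory.Strict.assoc f₁ g₁ h₁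
  have idc : ∀ {a₁ b₁ : C} (f₁ : a₁ ⟶ b₁), 𝟙 a₁ ≫ f₁ = f₁ :=
    fun f₁ => Bicategory.Strict.id_comp f₁
  have cid : ∀ {a₁ b₁ : C} (f₁ : a₁ ⟶ b₁), f₁ ≫ 𝟙 b₁ = f₁ :=
    fun f₁ => Bicategory.Strict.comp_id f₁
  -- comparison of the two iterated reindexings of `Γ.A.A▽`
  have hX1 : M.po (M.pr R hR R) (M.pr_disp R hR R) (M.tp R hR f)
      = M.po (M.pr R hR f) (M.pr_disp R hR f) (M.pr R hR f) :=
    (M.po_comp R hR R (M.tp R hR f)).trans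
      (by rw [M.comm R hR f]; exact (M.po_comp R hR f (M.pr R hR f)).symm)
  have hprT : HEq (M.pr (M.pr R hR R) (M.pr_disp R hR R) (M.tp R hR f))
      (M.pr (M.pr R hR f) (M.pr_disp R hR f) (M.pr R hR f)) :=
    (M.pr_comp R hR R (M.tp R hR f)).trans
      (by rw [M.comm R hR f]; exact (M.pr_comp R hR f (M.pr R hR f)).symm)
  have htpT : HEq (M.tp (M.pr R hR R) (M.pr_disp R hR R) (M.tp R hR f) ≫ M.tp R hR R)
      (M.tp (M.pr R hR f) (M.pr_disp R hR f) (M.pr R hR f) ≫ M.tp R hR f) :=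
    (M.tp_comp R hR R (M.tp R hR f)).trans
      (by rw [M.comm R hR f]; exact (M.tp_comp R hR f (M.pr R hR f)).symm)
  -- the stability data
  have hIO : M.po (E.idP R hR) (E.idDisp R hR)
      (M.tp (M.pr R hR R) (M.pr_disp R hR R) (M.tp R hR f))
      = E.idO (M.pr R hR f) (M.pr_disp R hR f) := E.idO_stab R hR f
  have hQm : HEq (M.pr (E.idP R hR) (E.idDisp R hR)
      (M.tp (M.pr R hR R) (M.pr_disp R hR R) (M.tp R hR f)))
      (E.idP (M.pr R hR f) (M.pr_disp R hR f)) := E.idP_stab R hR f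
  have hαst := E.alpha_stab R hR f
  -- transport of `ab'` along `hX1`
  obtain ⟨ab'', hab''⟩ :
      ∃ z : d ⟶ M.po (M.pr R hR R) (M.pr_disp R hR R) (M.tp R hR f), HEq z ab' :=
    ⟨cast (by rw [hX1]) ab', cast_heq _ _⟩
  have e1 : ab'' ≫ M.pr (M.pr R hR R) (M.pr_disp R hR R) (M.tp R hR f) = af :=
    (eq_of_heq (DM2.comp_congr_heq rfl hX1 rfl hab'' hprT)).trans hab'_pr
  have e2 : ab'' ≫ (M.tp (M.pr R hR R) (M.pr_disp R hR R) (M.tp R hR f) ≫ M.tp R hR R)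
      = bf ≫ M.tp R hR f := by
    rw [eq_of_heq (DM2.comp_congr_heq rfl hX1 rfl hab'' htpT), ← asc, hab'_tp]
  have coneab : b ≫ R = a ≫ R := by rw [ha, hb]
  have conef : (f ≫ b) ≫ R = (f ≫ a) ≫ R := by rw [asc, asc, ha, hb]
  -- `ab'' ≫ f•• = f ≫ (a;b)`
  have c1 : (ab'' ≫ M.tp (M.pr R hR R) (M.pr_disp R hR R) (M.tp R hR f)) ≫ M.pr R hR R
      = f ≫ a := by
    rw [asc, M.comm (M.pr R hR R) (M.pr_disp R hR R) (M.tp R hR f), ← asc, e1, haf_tp]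
  have c2 : (ab'' ≫ M.tp (M.pr R hR R) (M.pr_disp R hR R) (M.tp R hR f)) ≫ M.tp R hR R
      = f ≫ b := by
    rw [asc, e2, hbf_tp]
  have c1' : (f ≫ ab) ≫ M.pr R hR R = f ≫ a := by rw [asc, hab_pr]
  have c2' : (f ≫ ab) ≫ M.tp R hR R = f ≫ b := by rw [asc, hab_tp]
  have habm : ab'' ≫ M.tp (M.pr R hR R) (M.pr_disp R hR R) (M.tp R hR f) = f ≫ ab :=
    M.pb_unique hR R conef ⟨c1, c2⟩ ⟨c1', c2'⟩
  -- `k ≫ P_{Id_A} = a;b`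
  have hkQ : k ≫ E.idP R hR = ab :=
    M.pb_unique hR R coneab
      ⟨by rw [asc]; exact hk_a, by rw [asc]; exact hk_b⟩ ⟨hab_pr, hab_tp⟩
  -- transport of `k'` along `hIO`
  obtain ⟨k'', hk''⟩ :
      ∃ z : d ⟶ M.po (E.idP R hR) (E.idDisp R hR)
        (M.tp (M.pr R hR R) (M.pr_disp R hR R) (M.tp R hR f)), HEq z k' :=
    ⟨cast (by rw [hIO]) k', cast_heq _ _⟩
  -- the factorisation of `f ◁ p` through `α_A`
  have hq : HEq ((f ◁ p) ▷ R) (𝟙 ((f ≫ a) ≫ R)) := by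
    refine ((DM2.heq_whisker_assoc f p R).trans
      (DM2.whiskerLeft_congr_heq rfl rfl (HEq.refl f) (heq_of_eq ha) (heq_of_eq hb) hp)).trans
      ((heq_of_eq (Bicategory.whiskerLeft_id f (𝟙 y))).trans
        (DM2.id2_congr_heq rfl (heq_of_eq ?_)))
    rw [cid, asc, ha, cid]
  obtain ⟨z, -, hzu⟩ := E.factor1 R hR (f ≫ a) (f ≫ b) conef.symm (f ◁ p) hq
  have hfk : f ≫ k = z := by
    refine hzu (f ≫ k) ⟨by rw [asc, hk_a], by rw [asc, hk_b], ?_⟩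
    exact (DM2.heq_comp_whiskerLeft f k (E.alpha R hR)).trans
      (DM2.whiskerLeft_congr_heq rfl rfl (HEq.refl f) (heq_of_eq hk_a) (heq_of_eq hk_b) hk_p)
  -- `k'' ≫ f••• = f ≫ k` : both factorise `f ◁ p` through `α_A`
  have hstep1 : HEq (k'' ≫ M.pr (E.idP R hR) (E.idDisp R hR)
        (M.tp (M.pr R hR R) (M.pr_disp R hR R) (M.tp R hR f)))
      (k' ≫ E.idP (M.pr R hR f) (M.pr_disp R hR f)) :=
    DM2.comp_congr_heq rfl hIO hX1 hk'' hQm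
  have pre : (k'' ≫ M.pr (E.idP R hR) (E.idDisp R hR)
        (M.tp (M.pr R hR R) (M.pr_disp R hR R) (M.tp R hR f)))
      ≫ M.pr (M.pr R hR R) (M.pr_disp R hR R) (M.tp R hR f) = af := by
    rw [eq_of_heq (DM2.comp_congr_heq rfl hX1 rfl hstep1 hprT), asc]
    exact hk'_a
  have h3 : M.tp (E.idP R hR) (E.idDisp R hR)
        (M.tp (M.pr R hR R) (M.pr_disp R hR R) (M.tp R hR f))
      ≫ (E.idP R hR ≫ M.pr R hR R)
      = (M.pr (E.idP R hR) (E.idDisp R hR)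
          (M.tp (M.pr R hR R) (M.pr_disp R hR R) (M.tp R hR f))
        ≫ M.pr (M.pr R hR R) (M.pr_disp R hR R) (M.tp R hR f)) ≫ M.tp R hR f :=
    calc M.tp (E.idP R hR) (E.idDisp R hR)
          (M.tp (M.pr R hR R) (M.pr_disp R hR R) (M.tp R hR f))
        ≫ (E.idP R hR ≫ M.pr R hR R)
        = (M.tp (E.idP R hR) (E.idDisp R hR)
            (M.tp (M.pr R hR R) (M.pr_disp R hR R) (M.tp R hR f)) ≫ E.idP R hR)
          ≫ M.pr R hR R := (asc _ _ _).symm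
      _ = (M.pr (E.idP R hR) (E.idDisp R hR)
            (M.tp (M.pr R hR R) (M.pr_disp R hR R) (M.tp R hR f))
          ≫ M.tp (M.pr R hR R) (M.pr_disp R hR R) (M.tp R hR f)) ≫ M.pr R hR R := by
            rw [M.comm (E.idP R hR) (E.idDisp R hR)
              (M.tp (M.pr R hR R) (M.pr_disp R hR R) (M.tp R hR f))]
      _ = M.pr (E.idP R hR) (E.idDisp R hR)
            (M.tp (M.pr R hR R) (M.pr_disp R hR R) (M.tp R hR f))
          ≫ (M.tp (M.pr R hR R) (M.pr_disp R hR R) (M.tp R hR f) ≫ M.pr R hR R) :=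
            asc _ _ _
      _ = M.pr (E.idP R hR) (E.idDisp R hR)
            (M.tp (M.pr R hR R) (M.pr_disp R hR R) (M.tp R hR f))
          ≫ (M.pr (M.pr R hR R) (M.pr_disp R hR R) (M.tp R hR f) ≫ M.tp R hR f) := by
            rw [M.comm (M.pr R hR R) (M.pr_disp R hR R) (M.tp R hR f)]
      _ = (M.pr (E.idP R hR) (E.idDisp R hR)
            (M.tp (M.pr R hR R) (M.pr_disp R hR R) (M.tp R hR f))
          ≫ M.pr (M.pr R hR R) (M.pr_disp R hR R) (M.tp R hR f)) ≫ M.tp R hR f :=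
            (asc _ _ _).symm
  have h3' : M.tp (E.idP R hR) (E.idDisp R hR)
        (M.tp (M.pr R hR R) (M.pr_disp R hR R) (M.tp R hR f))
      ≫ (E.idP R hR ≫ M.tp R hR R)
      = M.pr (E.idP R hR) (E.idDisp R hR)
          (M.tp (M.pr R hR R) (M.pr_disp R hR R) (M.tp R hR f))
        ≫ (M.tp (M.pr R hR R) (M.pr_disp R hR R) (M.tp R hR f) ≫ M.tp R hR R) := by
    rw [← asc, M.comm (E.idP R hR) (E.idDisp R hR)
      (M.tp (M.pr R hR R) (M.pr_disp R hR R) (M.tp R hR f)), asc]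
  have t1 : (k'' ≫ M.tp (E.idP R hR) (E.idDisp R hR)
        (M.tp (M.pr R hR R) (M.pr_disp R hR R) (M.tp R hR f)))
      ≫ (E.idP R hR ≫ M.pr R hR R) = f ≫ a := by
    rw [asc, h3, ← asc, ← asc, pre, haf_tp]
  have t2 : (k'' ≫ M.tp (E.idP R hR) (E.idDisp R hR)
        (M.tp (M.pr R hR R) (M.pr_disp R hR R) (M.tp R hR f)))
      ≫ (E.idP R hR ≫ M.tp R hR R) = f ≫ b := by
    rw [asc, h3']
    have h5 : HEq (k'' ≫ M.pr (E.idP R hR) (E.idDisp R hR)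
          (M.tp (M.pr R hR R) (M.pr_disp R hR R) (M.tp R hR f))
        ≫ (M.tp (M.pr R hR R) (M.pr_disp R hR R) (M.tp R hR f) ≫ M.tp R hR R))
        (k' ≫ E.idP (M.pr R hR f) (M.pr_disp R hR f)
          ≫ (M.tp (M.pr R hR f) (M.pr_disp R hR f) (M.pr R hR f) ≫ M.tp R hR f)) :=
      DM2.comp_congr_heq rfl hIO rfl hk''
        (DM2.comp_congr_heq hIO hX1 rfl hQm htpT)
    rw [eq_of_heq h5, ← asc (E.idP (M.pr R hR f) (M.pr_disp R hR f)), ← asc, hk'_b, hbf_tp]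
  have hg1 : HEq (M.tp (E.idP R hR) (E.idDisp R hR)
        (M.tp (M.pr R hR R) (M.pr_disp R hR R) (M.tp R hR f))
      ≫ (E.idP R hR ≫ M.pr R hR R))
      ((E.idP (M.pr R hR f) (M.pr_disp R hR f)
        ≫ M.pr (M.pr R hR f) (M.pr_disp R hR f) (M.pr R hR f)) ≫ M.tp R hR f) :=
    (heq_of_eq h3).trans
      (DM2.comp_congr_heq hIO rfl rfl
        (DM2.comp_congr_heq hIO hX1 rfl hQm hprT) (HEq.refl (M.tp R hR f)))
  have hg2 : HEq (M.tp (E.idP R hR) (E.idDisp R hR)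
        (M.tp (M.pr R hR R) (M.pr_disp R hR R) (M.tp R hR f))
      ≫ (E.idP R hR ≫ M.tp R hR R))
      ((E.idP (M.pr R hR f) (M.pr_disp R hR f)
        ≫ M.tp (M.pr R hR f) (M.pr_disp R hR f) (M.pr R hR f)) ≫ M.tp R hR f) := by
    refine ((heq_of_eq h3').trans
      (DM2.comp_congr_heq hIO hX1 rfl hQm htpT)).trans (heq_of_eq ?_)
    rw [asc]
  have t3 : HEq ((k'' ≫ M.tp (E.idP R hR) (E.idDisp R hR)
        (M.tp (M.pr R hR R) (M.pr_disp R hR R) (M.tp R hR f))) ◁ E.alpha R hR)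
      (f ◁ p) := by
    refine ((DM2.heq_comp_whiskerLeft k'' _ (E.alpha R hR)).trans
      (DM2.whiskerLeft_congr_heq hIO rfl hk'' hg1 hg2 hαst.symm)).trans ?_
    exact ((DM2.heq_whisker_assoc k'
        (E.alpha (M.pr R hR f) (M.pr_disp R hR f)) (M.tp R hR f)).symm.trans
      (DM2.whiskerRight_congr_heq rfl (HEq.refl (M.tp R hR f))
        (heq_of_eq hk'_a) (heq_of_eq hk'_b) hk'_p)).trans hpf_tp
  have hk3 : k'' ≫ M.tp (E.idP R hR) (E.idDisp R hR)
      (M.tp (M.pr R hR R) (M.pr_disp R hR R) (M.tp R hR f)) = z :=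
    hzu _ ⟨t1, t2, t3⟩
  have key2 : k'' ≫ M.tp (E.idP R hR) (E.idDisp R hR)
      (M.tp (M.pr R hR R) (M.pr_disp R hR R) (M.tp R hR f)) = f ≫ k :=
    hk3.trans hfk.symm
  -- the object comparisons for the two sides
  have hPO1 : M.po (E.idP (M.pr R hR f) (M.pr_disp R hR f))
        (E.idDisp (M.pr R hR f) (M.pr_disp R hR f)) ab'
      = M.po (M.pr (E.idP R hR) (E.idDisp R hR)
          (M.tp (M.pr R hR R) (M.pr_disp R hR R) (M.tp R hR f)))
        (M.pr_disp (E.idP R hR) (E.idDisp R hR)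
          (M.tp (M.pr R hR R) (M.pr_disp R hR R) (M.tp R hR f))) ab'' :=
    M.po_congr hIO.symm hX1.symm rfl (E.idDisp (M.pr R hR f) (M.pr_disp R hR f))
      (M.pr_disp (E.idP R hR) (E.idDisp R hR)
        (M.tp (M.pr R hR R) (M.pr_disp R hR R) (M.tp R hR f))) hQm.symm hab''.symm
  have hPO2 : M.po (M.pr (E.idP R hR) (E.idDisp R hR)
        (M.tp (M.pr R hR R) (M.pr_disp R hR R) (M.tp R hR f)))
      (M.pr_disp (E.idP R hR) (E.idDisp R hR)
        (M.tp (M.pr R hR R) (M.pr_disp R hR R) (M.tp R hR f))) ab''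
      = M.po (E.idP R hR) (E.idDisp R hR) (f ≫ ab) := by
    rw [← habm]
    exact M.po_comp (E.idP R hR) (E.idDisp R hR)
      (M.tp (M.pr R hR R) (M.pr_disp R hR R) (M.tp R hR f)) ab''
  have hT2 := hPO1.trans hPO2
  have hT1 : M.po (M.pr (E.idP R hR) (E.idDisp R hR) ab)
        (M.pr_disp (E.idP R hR) (E.idDisp R hR) ab) f
      = M.po (E.idP R hR) (E.idDisp R hR) (f ≫ ab) :=
    M.po_comp (E.idP R hR) (E.idDisp R hR) ab f
  obtain ⟨curf₀, hcurf₀⟩ :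
      ∃ z₀ : d ⟶ M.po (E.idP R hR) (E.idDisp R hR) (f ≫ ab), HEq curf z₀ :=
    ⟨cast (by rw [hT1]) curf, (cast_heq _ _).symm⟩
  obtain ⟨cur'₀, hcur'₀⟩ :
      ∃ z₀ : d ⟶ M.po (E.idP R hR) (E.idDisp R hR) (f ≫ ab), HEq z₀ cur' :=
    ⟨cast (by rw [hT2]) cur', cast_heq _ _⟩
  -- characterisation of `{p}[f]`
  have hc1 : curf₀ ≫ M.pr (E.idP R hR) (E.idDisp R hR) (f ≫ ab) = 𝟙 d := by
    rw [← eq_of_heq (DM2.comp_congr_heq rfl hT1 rfl hcurf₀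
      (M.pr_comp (E.idP R hR) (E.idDisp R hR) ab f))]
    exact hcurf_pr
  have hc2 : curf₀ ≫ M.tp (E.idP R hR) (E.idDisp R hR) (f ≫ ab) = f ≫ k := by
    rw [← eq_of_heq (DM2.comp_congr_heq rfl hT1 rfl hcurf₀
      (M.tp_comp (E.idP R hR) (E.idDisp R hR) ab f)), ← asc, hcurf_tp, asc, hcur_tp]
  -- characterisation of `{p[f]}`
  have hprheq : HEq (M.pr (E.idP (M.pr R hR f) (M.pr_disp R hR f))
        (E.idDisp (M.pr R hR f) (M.pr_disp R hR f)) ab')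
      (M.pr (E.idP R hR) (E.idDisp R hR) (f ≫ ab)) := by
    have h6 := (M.pr_congr hIO.symm hX1.symm rfl (E.idDisp (M.pr R hR f) (M.pr_disp R hR f))
      (M.pr_disp (E.idP R hR) (E.idDisp R hR)
        (M.tp (M.pr R hR R) (M.pr_disp R hR R) (M.tp R hR f))) hQm.symm hab''.symm).trans
      (M.pr_comp (E.idP R hR) (E.idDisp R hR)
        (M.tp (M.pr R hR R) (M.pr_disp R hR R) (M.tp R hR f)) ab'')
    rwa [habm] at h6
  have hd1 : cur'₀ ≫ M.pr (E.idP R hR) (E.idDisp R hR) (f ≫ ab) = 𝟙 d := by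
    rw [eq_of_heq (DM2.comp_congr_heq rfl hT2.symm rfl hcur'₀ hprheq.symm)]
    exact hcur'_pr
  obtain ⟨cur'', hcur''⟩ :
      ∃ z₀ : d ⟶ M.po (M.pr (E.idP R hR) (E.idDisp R hR)
          (M.tp (M.pr R hR R) (M.pr_disp R hR R) (M.tp R hR f)))
        (M.pr_disp (E.idP R hR) (E.idDisp R hR)
          (M.tp (M.pr R hR R) (M.pr_disp R hR R) (M.tp R hR f))) ab'', HEq z₀ cur' :=
    ⟨cast (by rw [hPO1]) cur', cast_heq _ _⟩
  have htpheq : HEq (M.tp (E.idP R hR) (E.idDisp R hR) (f ≫ ab))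
      (M.tp (M.pr (E.idP R hR) (E.idDisp R hR)
          (M.tp (M.pr R hR R) (M.pr_disp R hR R) (M.tp R hR f)))
        (M.pr_disp (E.idP R hR) (E.idDisp R hR)
          (M.tp (M.pr R hR R) (M.pr_disp R hR R) (M.tp R hR f))) ab''
      ≫ M.tp (E.idP R hR) (E.idDisp R hR)
          (M.tp (M.pr R hR R) (M.pr_disp R hR R) (M.tp R hR f))) := by
    have h7 := M.tp_comp (E.idP R hR) (E.idDisp R hR)
      (M.tp (M.pr R hR R) (M.pr_disp R hR R) (M.tp R hR f)) ab''
    rw [habm] at h7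
    exact h7.symm
  have hcc : cur'' ≫ M.tp (M.pr (E.idP R hR) (E.idDisp R hR)
        (M.tp (M.pr R hR R) (M.pr_disp R hR R) (M.tp R hR f)))
      (M.pr_disp (E.idP R hR) (E.idDisp R hR)
        (M.tp (M.pr R hR R) (M.pr_disp R hR R) (M.tp R hR f))) ab'' = k'' := by
    have h8 : HEq (cur'' ≫ M.tp (M.pr (E.idP R hR) (E.idDisp R hR)
          (M.tp (M.pr R hR R) (M.pr_disp R hR R) (M.tp R hR f)))
        (M.pr_disp (E.idP R hR) (E.idDisp R hR)
          (M.tp (M.pr R hR R) (M.pr_disp R hR R) (M.tp R hR f))) ab'')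
        (cur' ≫ M.tp (E.idP (M.pr R hR f) (M.pr_disp R hR f))
          (E.idDisp (M.pr R hR f) (M.pr_disp R hR f)) ab') :=
      DM2.comp_congr_heq rfl hPO1.symm hIO hcur''
        (M.tp_congr hIO.symm hX1.symm rfl (E.idDisp (M.pr R hR f) (M.pr_disp R hR f))
      (M.pr_disp (E.idP R hR) (E.idDisp R hR)
        (M.tp (M.pr R hR R) (M.pr_disp R hR R) (M.tp R hR f))) hQm.symm hab''.symm).symm
    exact eq_of_heq ((h8.trans (heq_of_eq hcur'_tp)).trans hk''.symm)
  have hd2 : cur'₀ ≫ M.tp (E.idP R hR) (E.idDisp R hR) (f ≫ ab) = f ≫ k := by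
    have h9 : HEq (cur'₀ ≫ M.tp (E.idP R hR) (E.idDisp R hR) (f ≫ ab))
        (cur'' ≫ (M.tp (M.pr (E.idP R hR) (E.idDisp R hR)
            (M.tp (M.pr R hR R) (M.pr_disp R hR R) (M.tp R hR f)))
          (M.pr_disp (E.idP R hR) (E.idDisp R hR)
            (M.tp (M.pr R hR R) (M.pr_disp R hR R) (M.tp R hR f))) ab''
        ≫ M.tp (E.idP R hR) (E.idDisp R hR)
            (M.tp (M.pr R hR R) (M.pr_disp R hR R) (M.tp R hR f)))) :=
      DM2.comp_congr_heq rfl hPO2.symm rfl (hcur'₀.trans hcur''.symm) htpheq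
    rw [eq_of_heq h9, ← asc, hcc, key2]
  -- conclude by uniqueness of the induced map into the chosen pullback
  have conefin : (f ≫ k) ≫ E.idP R hR = 𝟙 d ≫ (f ≫ ab) := by
    rw [asc, hkQ, idc]
  have final : curf₀ = cur'₀ :=
    M.pb_unique (E.idDisp R hR) (f ≫ ab) conefin ⟨hc1, hc2⟩ ⟨hd1, hd2⟩
  exact hcurf₀.trans ((heq_of_eq final).trans hcur'₀)
end
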